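/- Let h(η) = 1/(1+e^{-η}) and U ~ N_q(0, Σ), and for each κ ∈ R let a(κ) be the unique adjustment with E[h(κ + d^TU + a(κ))] = h(κ). Then a(κ) → (1/2) d^TΣd as κ → +∞ and a(κ) → -(1/2) d^TΣd as κ → -∞. -/

import Mathlib

/-!
The logistic function satisfies `1 - h(η) = e^{-η} h(η)`, so for a random variable `V` with
`E[e^{-V}] < ∞`, dominated convergence gives `e^κ (1 - E[h(κ + V + c)]) → e^{-c} E[e^{-V}]`
as `κ → ∞`, while the defining equation makes `e^κ (1 - E[h(κ + V + a(κ))]) = h(κ) → 1`.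
Since the left-hand quantity is antitone in `c` and its limit strictly so, `a(κ)` is squeezed
onto the root of `e^{-c} E[e^{-V}] = 1`, the cumulant `log E[e^{-V}]`, which is `τ²/2` for
`V ~ N(0, τ²)`. The limit at `-∞` follows by applying this to `-V`, as `h(-η) = 1 - h(η)`.
-/

open MeasureTheory ProbabilityTheory Real Matrix Filter

/-- The inverse logit function `h(η) = 1/(1+e^{-η})`. -/
noncomputable def invLogit (η : ℝ) : ℝ := (1 + Real.exp (-η))⁻¹

open scoped Topology

theorem invLogit_eq_sigmoid : invLogit = sigmoid := rfl

theorem tendsto_of_tendsto_apply_of_antitone {ι α β : Type*} [LinearOrder α]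
    [TopologicalSpace α] [OrderTopology α] [LinearOrder β] [TopologicalSpace β]
    [OrderClosedTopology β] {l : Filter ι} {F : ι → α → β} {G : α → β} {a : ι → α} {s : α}
    (hF : ∀ i, Antitone (F i)) (hG : StrictAnti G)
    (hFG : ∀ c, Tendsto (fun i => F i c) l (𝓝 (G c)))
    (ha : Tendsto (fun i => F i (a i)) l (𝓝 (G s))) :
    Tendsto a l (𝓝 s) := by
  refine tendsto_order.2 ⟨fun b hb => ?_, fun b hb => ?_⟩
  · filter_upwards [ha.eventually_lt (hFG b) (hG hb)] with i hi
    exact lt_of_not_ge fun h => hi.not_ge (hF i h)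
  · filter_upwards [(hFG b).eventually_lt ha (hG hb)] with i hi
    exact lt_of_not_ge fun h => hi.not_ge (hF i h)

section Sigmoid

variable {Ω : Type*} {mΩ : MeasurableSpace Ω} {μ : Measure Ω} {X : Ω → ℝ}

theorem integrable_sigmoid_comp [IsFiniteMeasure μ] {f : Ω → ℝ} (hf : AEMeasurable f μ) :
    Integrable (fun ω => sigmoid (f ω)) μ :=
  .of_bound (continuous_sigmoid.measurable.comp_aemeasurable hf).aestronglyMeasurable 1
    (ae_of_all _ fun ω => by
      rw [norm_of_nonneg (sigmoid_nonneg _)]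
      exact sigmoid_le_one _)

theorem integral_sigmoid_neg_comp [IsProbabilityMeasure μ] {f : Ω → ℝ} (hf : AEMeasurable f μ) :
    ∫ ω, sigmoid (-f ω) ∂μ = 1 - ∫ ω, sigmoid (f ω) ∂μ := by
  simp_rw [sigmoid_neg]
  rw [integral_sub (integrable_const 1) (integrable_sigmoid_comp hf), integral_const]
  simp

theorem tendsto_integral_exp_mul_sigmoid_neg [IsFiniteMeasure μ] (hX : AEMeasurable X μ)
    (hexp : Integrable (fun ω => exp (-X ω)) μ) (c : ℝ) :
    Tendsto (fun κ => ∫ ω, exp κ * sigmoid (-(κ + X ω + c)) ∂μ) atTop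
      (𝓝 (exp (-c) * mgf X μ (-1))) := by
  have hrw : ∀ κ x, exp κ * sigmoid (-(κ + x + c)) = exp (-(x + c)) * sigmoid (κ + x + c) := by
    intro κ x
    rw [← sigmoid_mul_rexp_neg, mul_left_comm, ← exp_add]
    ring_nf
  have hmgf : exp (-c) * mgf X μ (-1) = ∫ ω, exp (-(X ω + c)) ∂μ := by
    rw [mgf, ← integral_const_mul]
    congr with ω
    rw [← exp_add]
    ring_nf
  have hbound : Integrable (fun ω => exp (-(X ω + c))) μ := by
    simpa [neg_add, exp_add] using hexp.const_mul (exp (-c))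
  simp_rw [hrw, hmgf]
  refine tendsto_integral_filter_of_dominated_convergence _
    (Eventually.of_forall fun κ => ?_) (Eventually.of_forall fun κ => ae_of_all _ fun ω => ?_)
    hbound (ae_of_all _ fun ω => ?_)
  · have := continuous_sigmoid.measurable
    fun_prop
  · rw [norm_of_nonneg (mul_nonneg (exp_pos _).le (sigmoid_nonneg _))]
    exact mul_le_of_le_one_right (exp_pos _).le (sigmoid_le_one _)
  · simpa using (tendsto_sigmoid_atTop.comp (tendsto_atTop_add_const_right _ c
      (tendsto_atTop_add_const_right _ (X ω) tendsto_id))).const_mul (exp (-(X ω + c)))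

variable [IsProbabilityMeasure μ] {a : ℝ → ℝ}

theorem tendsto_atTop_cgf_of_integral_sigmoid_eq (hX : AEMeasurable X μ)
    (hexp : Integrable (fun ω => exp (-X ω)) μ)
    (ha : ∀ κ, ∫ ω, sigmoid (κ + X ω + a κ) ∂μ = sigmoid κ) :
    Tendsto a atTop (𝓝 (cgf X μ (-1))) := by
  have hM : 0 < mgf X μ (-1) := mgf_pos (by simpa using hexp)
  refine tendsto_of_tendsto_apply_of_antitone
    (F := fun κ c => ∫ ω, exp κ * sigmoid (-(κ + X ω + c)) ∂μ)
    (G := fun c => exp (-c) * mgf X μ (-1)) (fun κ c c' hcc' => ?_)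
    (fun c c' hcc' => by dsimp only; gcongr) (tendsto_integral_exp_mul_sigmoid_neg hX hexp) ?_
  · simp only [integral_const_mul]
    refine mul_le_mul_of_nonneg_left (integral_mono (integrable_sigmoid_comp (by fun_prop))
      (integrable_sigmoid_comp (by fun_prop)) fun ω => sigmoid_le ?_) (exp_pos κ).le
    linarith
  · have hval : ∀ κ, ∫ ω, exp κ * sigmoid (-(κ + X ω + a κ)) ∂μ = sigmoid κ := fun κ => by
      rw [integral_const_mul, integral_sigmoid_neg_comp (by fun_prop), ha, ← sigmoid_neg,
        ← sigmoid_mul_rexp_neg, mul_left_comm, ← exp_add, add_neg_cancel, exp_zero, mul_one]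
    simp_rw [hval, cgf, exp_neg, exp_log hM, inv_mul_cancel₀ hM.ne']
    exact tendsto_sigmoid_atTop

theorem tendsto_atBot_neg_cgf_of_integral_sigmoid_eq (hX : AEMeasurable X μ)
    (hexp : Integrable (fun ω => exp (X ω)) μ)
    (ha : ∀ κ, ∫ ω, sigmoid (κ + X ω + a κ) ∂μ = sigmoid κ) :
    Tendsto a atBot (𝓝 (-cgf X μ 1)) := by
  have hneg : Tendsto (fun κ => -a (-κ)) atTop (𝓝 (cgf (-X) μ (-1))) := by
    refine tendsto_atTop_cgf_of_integral_sigmoid_eq hX.neg (by simpa using hexp) fun κ => ?_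
    have h := integral_sigmoid_neg_comp (μ := μ) (f := fun ω => -κ + X ω + a (-κ)) (by fun_prop)
    rw [ha, ← sigmoid_neg, neg_neg] at h
    rw [← h]
    congr with ω
    simp only [Pi.neg_apply]
    ring_nf
  rw [cgf_neg, neg_neg] at hneg
  simpa using (hneg.comp tendsto_neg_atBot_atTop).neg

end Sigmoid

/-- For a logit link with `U ~ N_q(0, Σ)` (characterized via Cramér–Wold),
the adjustment `a(κ)` satisfying `E[h(κ + dᵀU + a(κ))] = h(κ)` converges to
`(1/2) dᵀΣd` as `κ → +∞` and to `-(1/2) dᵀΣd` as `κ → -∞`. -/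
theorem logit_adjustment_limit {q : ℕ} (S : Matrix (Fin q) (Fin q) ℝ)
    (hS : S.PosSemidef) (d : Fin q → ℝ) (μ : Measure (Fin q → ℝ))
    [IsProbabilityMeasure μ]
    (hU : ∀ c : Fin q → ℝ,
      μ.map (fun u => ∑ i, c i * u i) = gaussianReal 0 (c ⬝ᵥ S *ᵥ c).toNNReal)
    (a : ℝ → ℝ)
    (ha : ∀ κ : ℝ, (∫ u, invLogit (κ + (∑ i, d i * u i) + a κ) ∂μ) = invLogit κ) :
    Tendsto a atTop (nhds ((d ⬝ᵥ S *ᵥ d) / 2)) ∧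
      Tendsto a atBot (nhds (-((d ⬝ᵥ S *ᵥ d) / 2))) := by
  rw [invLogit_eq_sigmoid] at ha
  set X : (Fin q → ℝ) → ℝ := fun u => ∑ i, d i * u i
  have hX : AEMeasurable X μ := by fun_prop
  have hexp (t : ℝ) : Integrable (fun u => exp (t * X u)) μ :=
    mgf_pos_iff.1 (by rw [mgf_gaussianReal (hU d)]; positivity)
  have hcgf (t : ℝ) : cgf X μ t = (d ⬝ᵥ S *ᵥ d) * t ^ 2 / 2 := by
    have hτ : 0 ≤ d ⬝ᵥ S *ᵥ d := by simpa using hS.dotProduct_mulVec_nonneg d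
    rw [cgf_gaussianReal (hU d), Real.coe_toNNReal _ hτ]
    ring
  constructor
  · simpa [hcgf] using tendsto_atTop_cgf_of_integral_sigmoid_eq hX (by simpa using hexp (-1)) ha
  · simpa [hcgf] using
      tendsto_atBot_neg_cgf_of_integral_sigmoid_eq hX (by simpa using hexp 1) ha
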